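/- arXiv:2007.13605 — 4 statements merged into one kernel-verified Lean document; each statement's English description precedes it below -/
import Mathlib

section
/- Let Φ: ℝ^d × ℝ^n → ℝ be ρ-weakly convex in its first component uniformly in the second, concave and upper semicontinuous in its second component, and let h: ℝ^n → ℝ ∪ {+∞} be proper, convex, lower semicontinuous with bounded domain. Define φ(x) := max_y { Φ(x,y) − h(y) } and Y(x) := argmax_y { Φ(x,y) − h(y) }. Then for every x ∈ ℝ^d and every y* ∈ Y(x), ∂[Φ(·, y*)](x) ⊆ ∂φ(x); in particular, φ is ρ-weakly convex. -/
open scoped RealInnerProductSpace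

/-- Convexity for extended-real-valued functions, via the secant inequality. -/
def ERealConvexOn {E : Type*} [AddCommGroup E] [Module ℝ E] (g : E → EReal) : Prop :=
  ∀ x y : E, ∀ a b : ℝ, 0 ≤ a → 0 ≤ b → a + b = 1 →
    g (a • x + b • y) ≤ (a : EReal) * g x + (b : EReal) * g y

/-- Fréchet subdifferential of a real-valued function. -/
def FrechetSubdiffR {d : ℕ} (g : EuclideanSpace ℝ (Fin d) → ℝ)
    (xbar : EuclideanSpace ℝ (Fin d)) : Set (EuclideanSpace ℝ (Fin d)) :=
  {v | ∀ c : ℝ, 0 < c → ∀ᶠ x in nhds xbar, g xbar + ⟪v, x - xbar⟫ - c * ‖x - xbar‖ ≤ g x}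

/-- Fréchet subdifferential of an extended-real-valued function. -/
def FrechetSubdiffE {d : ℕ} (g : EuclideanSpace ℝ (Fin d) → EReal)
    (xbar : EuclideanSpace ℝ (Fin d)) : Set (EuclideanSpace ℝ (Fin d)) :=
  {v | ∀ c : ℝ, 0 < c → ∀ᶠ x in nhds xbar,
    g xbar + ((⟪v, x - xbar⟫ - c * ‖x - xbar‖ : ℝ) : EReal) ≤ g x}

/-- The max function `φ(x) = sup_y { Φ(x,y) - h(y) }`. -/
noncomputable def maxFun {d n : ℕ}
    (Φ : EuclideanSpace ℝ (Fin d) → EuclideanSpace ℝ (Fin n) → ℝ)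
    (h : EuclideanSpace ℝ (Fin n) → EReal) (x : EuclideanSpace ℝ (Fin d)) : EReal :=
  ⨆ y, ((Φ x y : ℝ) : EReal) - h y

/-!
Both claims come from `φ` being the pointwise supremum of the functions
`x ↦ Φ(x, y) - h(y)`. The member `y = y*` touches `φ` from below at `x`, so its Fréchet
subgradients there are Fréchet subgradients of `φ`. Adding `(ρ/2)‖x‖²` to every member makes it
convex, and a pointwise supremum of convex functions is convex.
-/

namespace EReal

lemma galoisConnection_add_coe_sub_coe (r : ℝ) :
    GaloisConnection (· + (r : EReal)) (· - (r : EReal)) := fun _ _ =>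
  (le_sub_iff_add_le (.inl (coe_ne_bot r)) (.inl (coe_ne_top r))).symm

lemma iSup_add_coe {ι : Sort*} (u : ι → EReal) (r : ℝ) :
    (⨆ i, u i) + r = ⨆ i, (u i + r) :=
  (galoisConnection_add_coe_sub_coe r).l_iSup

lemma coe_sub_add_coe (a b : ℝ) (e : EReal) :
    ((a : EReal) - e) + b = ((a + b : ℝ) : EReal) - e := by
  rw [sub_eq_add_neg, sub_eq_add_neg, add_right_comm, coe_add]

end EReal

section Convexity

variable {E : Type*} [AddCommGroup E] [Module ℝ E]

lemma ERealConvexOn.iSup {ι : Sort*} {g : ι → E → EReal} (hg : ∀ i, ERealConvexOn (g i)) :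
    ERealConvexOn (fun x => ⨆ i, g i x) := by
  intro x y a b ha hb hab
  refine iSup_le fun i => (hg i x y a b ha hb hab).trans ?_
  have ha' : (0 : EReal) ≤ a := by exact_mod_cast ha
  have hb' : (0 : EReal) ≤ b := by exact_mod_cast hb
  gcongr
  · exact le_iSup (g · x) i
  · exact le_iSup (g · y) i

lemma ConvexOn.erealConvexOn_coe_add {f : E → ℝ} (hf : ConvexOn ℝ Set.univ f) (c : EReal) :
    ERealConvexOn (fun x => (f x : EReal) + c) := by
  intro x y a b ha hb hab
  have ha' : (0 : EReal) ≤ a := by exact_mod_cast ha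
  have hb' : (0 : EReal) ≤ b := by exact_mod_cast hb
  have hreal : f (a • x + b • y) ≤ a * f x + b * f y := hf.2 trivial trivial ha hb hab
  calc (f (a • x + b • y) : EReal) + c ≤ ((a * f x + b * f y : ℝ) : EReal) + c := by
        gcongr
    _ = (a * f x + b * f y : EReal) + (a + b : EReal) * c := by
        rw [← EReal.coe_add a b, hab, EReal.coe_one, one_mul, EReal.coe_add, EReal.coe_mul,
          EReal.coe_mul]
    _ = (a : EReal) * (f x + c) + (b : EReal) * (f y + c) := by
        rw [EReal.right_distrib_of_nonneg ha' hb',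
          EReal.left_distrib_of_nonneg_of_ne_top ha' (EReal.coe_ne_top a),
          EReal.left_distrib_of_nonneg_of_ne_top hb' (EReal.coe_ne_top b)]
        abel

lemma ConvexOn.erealConvexOn_coe_sub {f : E → ℝ} (hf : ConvexOn ℝ Set.univ f) (e : EReal) :
    ERealConvexOn (fun x => (f x : EReal) - e) :=
  hf.erealConvexOn_coe_add (-e)

end Convexity

section FrechetSubdifferential

variable {d : ℕ}

lemma frechetSubdiffE_subset_of_le_of_eq {g f : EuclideanSpace ℝ (Fin d) → EReal}
    {x : EuclideanSpace ℝ (Fin d)} (hle : g ≤ f) (heq : g x = f x) :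
    FrechetSubdiffE g x ⊆ FrechetSubdiffE f x := fun v hv c hc => by
  filter_upwards [hv c hc] with x' hx'
  exact heq ▸ hx'.trans (hle x')

lemma frechetSubdiffR_subset_frechetSubdiffE_coe_sub (ψ : EuclideanSpace ℝ (Fin d) → ℝ)
    (e : EReal) (x : EuclideanSpace ℝ (Fin d)) :
    FrechetSubdiffR ψ x ⊆ FrechetSubdiffE (fun x' => (ψ x' : EReal) - e) x := fun v hv c hc => by
  filter_upwards [hv c hc] with x' hx'
  rw [EReal.coe_sub_add_coe]
  exact EReal.sub_le_sub (EReal.coe_le_coe_iff.2 (by linarith)) le_rfl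

variable {n : ℕ} (Φ : EuclideanSpace ℝ (Fin d) → EuclideanSpace ℝ (Fin n) → ℝ)
  (h : EuclideanSpace ℝ (Fin n) → EReal)

lemma frechetSubdiffR_subset_frechetSubdiffE_maxFun {x : EuclideanSpace ℝ (Fin d)}
    {ystar : EuclideanSpace ℝ (Fin n)}
    (hmax : ((Φ x ystar : ℝ) : EReal) - h ystar = maxFun Φ h x) :
    FrechetSubdiffR (fun x' => Φ x' ystar) x ⊆ FrechetSubdiffE (maxFun Φ h) x :=
  (frechetSubdiffR_subset_frechetSubdiffE_coe_sub _ (h ystar) x).trans <|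
    frechetSubdiffE_subset_of_le_of_eq
      (fun x' => le_iSup (fun y => ((Φ x' y : ℝ) : EReal) - h y) ystar) hmax

lemma maxFun_add_coe (x : EuclideanSpace ℝ (Fin d)) (r : ℝ) :
    maxFun Φ h x + r = ⨆ y, ((Φ x y + r : ℝ) : EReal) - h y := by
  simp only [maxFun, EReal.iSup_add_coe, EReal.coe_sub_add_coe]

end FrechetSubdifferential

theorem stmt3_general {d n : ℕ}
    (Φ : EuclideanSpace ℝ (Fin d) → EuclideanSpace ℝ (Fin n) → ℝ)
    (h : EuclideanSpace ℝ (Fin n) → EReal) (ρ : ℝ)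
    (hwc : ∀ y, ConvexOn ℝ Set.univ (fun x => Φ x y + ρ / 2 * ‖x‖ ^ 2)) :
    (∀ x ystar, ((Φ x ystar : ℝ) : EReal) - h ystar = maxFun Φ h x →
      ∀ v ∈ FrechetSubdiffR (fun x' => Φ x' ystar) x, v ∈ FrechetSubdiffE (maxFun Φ h) x) ∧
    ERealConvexOn (fun x => maxFun Φ h x + ((ρ / 2 * ‖x‖ ^ 2 : ℝ) : EReal)) := by
  refine ⟨fun x ystar hmax => frechetSubdiffR_subset_frechetSubdiffE_maxFun Φ h hmax, ?_⟩
  simp only [maxFun_add_coe]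
  exact ERealConvexOn.iSup fun y => (hwc y).erealConvexOn_coe_sub (h y)

/-- extended Danskin: under weak convexity in `x`, concavity and
upper semicontinuity in `y`, and a proper convex lsc regularizer `h` with bounded
domain, every Fréchet subgradient of `Φ(·, y*)` at `x` with `y* ∈ Y(x)` is a
Fréchet subgradient of the max function `φ` at `x`; in particular `φ` is
`ρ`-weakly convex. -/
theorem stmt3 {d n : ℕ}
    (Φ : EuclideanSpace ℝ (Fin d) → EuclideanSpace ℝ (Fin n) → ℝ)
    (h : EuclideanSpace ℝ (Fin n) → EReal) (ρ : ℝ) (hρ : 0 ≤ ρ)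
    (hwc : ∀ y, ConvexOn ℝ Set.univ (fun x => Φ x y + ρ / 2 * ‖x‖ ^ 2))
    (hconc : ∀ x, ConcaveOn ℝ Set.univ (fun y => Φ x y))
    (husc : ∀ x, UpperSemicontinuous (fun y => Φ x y))
    (hhproper : (∀ y, h y ≠ ⊥) ∧ ∃ y, h y ≠ ⊤)
    (hhconv : ERealConvexOn h) (hhlsc : LowerSemicontinuous h)
    (hhdom : Bornology.IsBounded {y | h y ≠ ⊤}) :
    (∀ x ystar, ((Φ x ystar : ℝ) : EReal) - h ystar = maxFun Φ h x →
      ∀ v ∈ FrechetSubdiffR (fun x' => Φ x' ystar) x, v ∈ FrechetSubdiffE (maxFun Φ h) x) ∧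
    ERealConvexOn (fun x => maxFun Φ h x + ((ρ / 2 * ‖x‖ ^ 2 : ℝ) : EReal)) :=
  stmt3_general Φ h ρ hwc
end

section
/- Let ψ = φ + f be proper, ρ-weakly convex and lower semicontinuous with φ: ℝ^d → ℝ continuous and weakly convex and f proper convex lsc. Fix λ ∈ (0, ρ⁻¹), η_x > 0, and x ∈ ℝ^d, and set x̂ := prox_{λψ}(x). Then there exists v ∈ ∂φ(x̂) such that x̂ = prox_{η_x f}( η_x λ⁻¹ x − η_x v + (1 − η_x λ⁻¹) x̂ ). -/
/-!
A `ρ`-weakly convex function is encoded as `StrongConvexOn s (-ρ)`. Comparing `x̂` with the points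
of the segment from `x̂` to `z` in the prox inequality and letting the segment shrink gives the
proximal subgradient inequality
`ψ z ≥ ψ x̂ + ⟪λ⁻¹ (x - x̂), z - x̂⟫ - ρ/2 ‖z - x̂‖²`.
With `c = max ρφ ρ`, it says that the convex continuous function `A = φ + c/2 ‖· - x̂‖²` plus the
convex function `f` lies above an affine function touching at `x̂`. Separating the open strict
epigraph of `A` from the hypograph of the remaining concave part (Hahn–Banach) splits this affine
minorant into a subgradient `v` of `A`, hence a Fréchet subgradient of `φ`, and a subgradient
`λ⁻¹ (x - x̂) - v` of `f`. Finally, `w ∈ ∂f(x̂)` means exactly `x̂ = prox_{ηf}(x̂ + η w)`, and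
`x̂ + η (λ⁻¹ (x - x̂) - v)` is the point in the statement.
-/

open scoped RealInnerProductSpace

open Set Filter Topology

theorem le_of_forall_le_add_mul {a b c : ℝ} (h : ∀ t ∈ Ioc (0 : ℝ) 1, a ≤ b + t * c) : a ≤ b := by
  have hlim : Tendsto (fun t : ℝ => b + t * c) (𝓝[>] 0) (𝓝 b) :=
    tendsto_nhdsWithin_of_tendsto_nhds (Continuous.tendsto' (by fun_prop) 0 b (by simp))
  exact ge_of_tendsto hlim (eventually_of_mem (Ioc_mem_nhdsGT one_pos) h)

section Separation

variable {E : Type*} [TopologicalSpace E] [AddCommGroup E] [Module ℝ E]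
  [IsTopologicalAddGroup E] [ContinuousSMul ℝ E]

theorem exists_affine_between_of_concaveOn_le_convexOn {A k : E → ℝ} {D : Set E}
    (hA : ConvexOn ℝ univ A) (hAc : Continuous A) (hk : ConcaveOn ℝ D k) (hD : D.Nonempty)
    (hkA : ∀ z ∈ D, k z ≤ A z) :
    ∃ (l : StrongDual ℝ E) (b : ℝ), (∀ z, l z + b ≤ A z) ∧ ∀ z ∈ D, k z ≤ l z + b := by
  have hopen : IsOpen {p : E × ℝ | p.1 ∈ univ ∧ A p.1 < p.2} := by
    simpa only [mem_univ, true_and] using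
      isOpen_lt (f := fun p : E × ℝ => A p.1) (hAc.comp continuous_fst) continuous_snd
  have hdisj : Disjoint {p : E × ℝ | p.1 ∈ univ ∧ A p.1 < p.2} {p | p.1 ∈ D ∧ p.2 ≤ k p.1} :=
    disjoint_left.2 fun p hpS hpT => (hpT.2.trans (hkA _ hpT.1)).not_gt hpS.2
  obtain ⟨L, c, hS, hT⟩ := geometric_hahn_banach_open hA.convex_strict_epigraph hopen
    hk.convex_hypograph hdisj
  set l := L.comp (ContinuousLinearMap.inl ℝ E ℝ)
  set α := L (0, 1)
  have hL : ∀ z r, L (z, r) = l z + r * α := fun z r => by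
    rw [show (z, r) = (z, 0) + r • ((0 : E), (1 : ℝ)) by simp, map_add, map_smul, smul_eq_mul]
    rfl
  have hS' : ∀ z r, A z < r → l z + r * α < c := fun z r h => hL z r ▸ hS (z, r) ⟨trivial, h⟩
  have hT' : ∀ z ∈ D, c ≤ l z + k z * α := fun z hz => hL z (k z) ▸ hT (z, k z) ⟨hz, le_rfl⟩
  have hα : α < 0 := by
    obtain ⟨z₀, hz₀⟩ := hD
    by_contra! hα
    set r := max (A z₀) (k z₀) + 1
    have hAr : A z₀ < r := by linarith [le_max_left (A z₀) (k z₀)]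
    have hkr : k z₀ ≤ r := by linarith [le_max_right (A z₀) (k z₀)]
    linarith [hS' z₀ r hAr, hT' z₀ hz₀, mul_le_mul_of_nonneg_right hkr hα]
  -- `A z` is a limit of heights of points of the open strict epigraph
  have hAl : ∀ z, l z + A z * α ≤ c := fun z =>
    le_of_tendsto (x := 𝓝[>] A z)
      (tendsto_nhdsWithin_of_tendsto_nhds
        ((by fun_prop : Continuous fun r => l z + r * α).tendsto _))
      (eventually_nhdsWithin_of_forall fun r hr => (hS' z r hr).le)
  have hα0 : α ≠ 0 := hα.ne
  refine ⟨(-α)⁻¹ • l, c / α, fun z => ?_, fun z hz => ?_⟩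
  · have key : A z - ((-α)⁻¹ * l z + c / α) = (c - (l z + A z * α)) / (-α) := by
      field_simp; ring
    rw [smul_apply, smul_eq_mul, ← sub_nonneg, key]
    exact div_nonneg (sub_nonneg.2 (hAl z)) (by linarith)
  · have key : (-α)⁻¹ * l z + c / α - k z = (l z + k z * α - c) / (-α) := by
      field_simp; ring
    rw [smul_apply, smul_eq_mul, ← sub_nonneg, key]
    exact div_nonneg (sub_nonneg.2 (hT' z hz)) (by linarith)

end Separation

section InnerProductSpace

variable {E : Type*} [NormedAddCommGroup E] [InnerProductSpace ℝ E]

theorem strongConvexOn_neg_iff_convexOn_add {s : Set E} {ρ : ℝ} {h : E → ℝ} :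
    StrongConvexOn s (-ρ) h ↔ ConvexOn ℝ s (fun z => h z + ρ / 2 * ‖z‖ ^ 2) := by
  simp [strongConvexOn_iff_convex, neg_div]

theorem strongConvexOn_half_mul_sq_norm_sub (c : ℝ) (y : E) :
    StrongConvexOn univ c (fun z => c / 2 * ‖z - y‖ ^ 2) := by
  refine strongConvexOn_iff_convex.2 <|
    ((innerₛₗ ℝ (-c • y)).convexOn convex_univ |>.add_const (c / 2 * ‖y‖ ^ 2)).congr fun z _ => ?_
  simp only [Pi.add_apply, coe_innerₛₗ_apply, norm_sub_sq_real, real_inner_smul_left,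
    real_inner_comm y z]
  ring

theorem convexOn_add_half_mul_sq_norm_sub {φ : E → ℝ} {ρ c : ℝ} (hφ : StrongConvexOn univ (-ρ) φ)
    (hρc : ρ ≤ c) (y : E) : ConvexOn ℝ univ (fun z => φ z + c / 2 * ‖z - y‖ ^ 2) :=
  (hφ.add (strongConvexOn_half_mul_sq_norm_sub c y)).convexOn fun r => by
    simp only [Pi.add_apply, Pi.zero_apply]
    nlinarith [sq_nonneg r]

theorem StrongConvexOn.add_inner_le_of_isMinOn {D : Set E} {h : E → ℝ} {ρ lam : ℝ} {x xhat z : E}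
    (hh : StrongConvexOn D (-ρ) h)
    (hmin : IsMinOn (fun y => h y + 1 / (2 * lam) * ‖y - x‖ ^ 2) D xhat) (hxhat : xhat ∈ D)
    (hz : z ∈ D) :
    h xhat + ⟪lam⁻¹ • (x - xhat), z - xhat⟫ ≤ h z + ρ / 2 * ‖z - xhat‖ ^ 2 := by
  refine le_of_forall_le_add_mul (c := (1 / (2 * lam) - ρ / 2) * ‖z - xhat‖ ^ 2) fun t ht => ?_
  have h1t : 0 ≤ 1 - t := by linarith [ht.2]
  have hconv := hh.2 hxhat hz h1t ht.1.le (by ring)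
  have hprox := isMinOn_iff.1 hmin _ (hh.1 hxhat hz h1t ht.1.le (by ring))
  have hseg : (1 - t) • xhat + t • z - x = (xhat - x) + t • (z - xhat) := by module
  simp only [smul_eq_mul, norm_sub_rev xhat z] at hconv
  simp only [hseg, norm_add_sq_real, inner_smul_right, norm_smul, mul_pow, Real.norm_eq_abs,
    sq_abs] at hprox
  have hinner : ⟪lam⁻¹ • (x - xhat), z - xhat⟫ = -(lam⁻¹ * ⟪xhat - x, z - xhat⟫) := by
    rw [real_inner_smul_left, ← neg_sub xhat x, inner_neg_left, mul_neg]
  refine le_of_mul_le_mul_left ?_ ht.1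
  rw [hinner]
  linear_combination hconv + hprox

theorem exists_inner_le_of_add_le [CompleteSpace E] {A g : E → ℝ} {D : Set E} {xhat s : E}
    (hA : ConvexOn ℝ univ A) (hAc : Continuous A) (hg : ConvexOn ℝ D g) (hxhat : xhat ∈ D)
    (h : ∀ z ∈ D, A xhat + g xhat + ⟪s, z - xhat⟫ ≤ A z + g z) :
    ∃ v, (∀ z, A xhat + ⟪v, z - xhat⟫ ≤ A z) ∧ ∀ z ∈ D, g xhat + ⟪s - v, z - xhat⟫ ≤ g z := by
  set k : E → ℝ := fun z => A xhat + g xhat + ⟪s, z - xhat⟫ - g z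
  have hk : ConcaveOn ℝ D k :=
    (((innerₛₗ ℝ s).concaveOn hg.1).add_const (A xhat + g xhat - ⟪s, xhat⟫)).sub hg |>.congr
      fun z _ => by
        simp only [Pi.sub_apply, Pi.add_apply, coe_innerₛₗ_apply, k, inner_sub_right]
        ring
  obtain ⟨l, b, hlA, hkl⟩ := exists_affine_between_of_concaveOn_le_convexOn hA hAc hk ⟨xhat, hxhat⟩
    fun z hz => by linarith [h z hz]
  have hb : b = A xhat - l xhat := by
    linarith [hlA xhat, hkl xhat hxhat, show k xhat = A xhat by simp [k]]
  refine ⟨(InnerProductSpace.toDual ℝ E).symm l, fun z => ?_, fun z hz => ?_⟩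
  · rw [InnerProductSpace.toDual_symm_apply, map_sub]
    linarith [hlA z]
  · rw [inner_sub_left, InnerProductSpace.toDual_symm_apply, map_sub]
    linarith [hkl z hz]

theorem prox_objective_le_of_subgradient {g : E → ℝ} {xhat w z : E} {η : ℝ} (hη : 0 < η)
    (hw : g xhat + ⟪w, z - xhat⟫ ≤ g z) :
    g xhat + 1 / (2 * η) * ‖xhat - (xhat + η • w)‖ ^ 2
      ≤ g z + 1 / (2 * η) * ‖z - (xhat + η • w)‖ ^ 2 := by
  have hz : z - (xhat + η • w) = (z - xhat) - η • w := by abel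
  rw [sub_add_cancel_left, norm_neg, hz, norm_sub_sq_real, inner_smul_right, real_inner_comm]
  have hsq : 0 ≤ 1 / (2 * η) * ‖z - xhat‖ ^ 2 := by positivity
  have hinner : 1 / (2 * η) * (2 * (η * ⟪w, z - xhat⟫)) = ⟪w, z - xhat⟫ := by field_simp
  linarith

end InnerProductSpace

theorem mem_frechetSubdiffR_of_forall_le {d : ℕ} {φ : EuclideanSpace ℝ (Fin d) → ℝ}
    {xhat v : EuclideanSpace ℝ (Fin d)} {c : ℝ}
    (h : ∀ z, φ xhat + ⟪v, z - xhat⟫ ≤ φ z + c / 2 * ‖z - xhat‖ ^ 2) :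
    v ∈ FrechetSubdiffR φ xhat := by
  intro ε hε
  have hlim : Tendsto (fun z => c / 2 * ‖z - xhat‖) (𝓝 xhat) (𝓝 0) :=
    Continuous.tendsto' (by fun_prop) xhat 0 (by simp)
  filter_upwards [hlim.eventually (gt_mem_nhds hε)] with z hz
  nlinarith [h z, mul_le_mul_of_nonneg_right hz.le (norm_nonneg (z - xhat))]

section ERealConvexOn

variable {E : Type*} [AddCommGroup E] [Module ℝ E] {f : E → EReal}

theorem ERealConvexOn.convex_setOf_ne_top (hf : ERealConvexOn f) (hbot : ∀ z, f z ≠ ⊥) :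
    Convex ℝ {z | f z ≠ ⊤} := by
  intro x hx y hy a b ha hb hab
  lift f x to ℝ using ⟨hx, hbot x⟩ with r hr
  lift f y to ℝ using ⟨hy, hbot y⟩ with r' hr'
  have := hf x y a b ha hb hab
  rw [← hr, ← hr'] at this
  exact ne_top_of_le_ne_top (by exact_mod_cast EReal.coe_ne_top (a * r + b * r')) this

theorem ERealConvexOn.convexOn_toReal {u w : E → ℝ}
    (hf : ERealConvexOn (fun z => (u z : EReal) + f z + (w z : EReal)))
    (hbot : ∀ z, f z ≠ ⊥) (hD : Convex ℝ {z | f z ≠ ⊤}) :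
    ConvexOn ℝ {z | f z ≠ ⊤} (fun z => u z + (f z).toReal + w z) := by
  refine ⟨hD, fun x hx y hy a b ha hb hab => ?_⟩
  have hxy := hf x y a b ha hb hab
  simp only at hxy
  rw [← EReal.coe_toReal hx (hbot x), ← EReal.coe_toReal hy (hbot y),
    ← EReal.coe_toReal (hD hx hy ha hb hab) (hbot _)] at hxy
  exact_mod_cast hxy

end ERealConvexOn

theorem stmt5_general {d : ℕ} (φ : EuclideanSpace ℝ (Fin d) → ℝ)
    (f : EuclideanSpace ℝ (Fin d) → EReal) (ρφ ρ lam η : ℝ)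
    (hφcont : Continuous φ)
    (hφwc : ConvexOn ℝ Set.univ (fun z => φ z + ρφ / 2 * ‖z‖ ^ 2))
    (hfproper : (∀ z, f z ≠ ⊥) ∧ ∃ z, f z ≠ ⊤)
    (hfconv : ERealConvexOn f)
    (hψwc : ERealConvexOn (fun z => ((φ z : ℝ) : EReal) + f z + ((ρ / 2 * ‖z‖ ^ 2 : ℝ) : EReal)))
    (hη : 0 < η)
    (x xhat : EuclideanSpace ℝ (Fin d))
    (hxhat : ∀ z, ((φ xhat : ℝ) : EReal) + f xhat + ((1 / (2 * lam) * ‖xhat - x‖ ^ 2 : ℝ) : EReal)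
              ≤ ((φ z : ℝ) : EReal) + f z + ((1 / (2 * lam) * ‖z - x‖ ^ 2 : ℝ) : EReal)) :
    ∃ v ∈ FrechetSubdiffR φ xhat,
      ∀ z, f xhat + ((1 / (2 * η) * ‖xhat - ((η * lam⁻¹) • x - η • v + (1 - η * lam⁻¹) • xhat)‖ ^ 2 : ℝ) : EReal)
        ≤ f z + ((1 / (2 * η) * ‖z - ((η * lam⁻¹) • x - η • v + (1 - η * lam⁻¹) • xhat)‖ ^ 2 : ℝ) : EReal) := by
  obtain ⟨hfbot, z₀, hz₀⟩ := hfproper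
  set D := {z | f z ≠ ⊤}
  set g := fun z => (f z).toReal
  have hcoe : ∀ z ∈ D, f z = (g z : EReal) := fun z hz => (EReal.coe_toReal hz (hfbot z)).symm
  have hD : Convex ℝ D := hfconv.convex_setOf_ne_top hfbot
  have hg : ConvexOn ℝ D g := by
    have hf0 : ERealConvexOn fun z => ((0 : ℝ) : EReal) + f z + ((0 : ℝ) : EReal) := by
      simpa using hfconv
    simpa using hf0.convexOn_toReal hfbot hD
  have hxhatD : xhat ∈ D := by
    intro htop
    have := hxhat z₀
    rw [htop, hcoe z₀ hz₀, EReal.coe_add_top, EReal.top_add_coe, top_le_iff] at this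
    exact EReal.coe_ne_top _ (by exact_mod_cast this)
  have hψ : StrongConvexOn D (-ρ) (fun z => φ z + g z) :=
    strongConvexOn_neg_iff_convexOn_add.2 (hψwc.convexOn_toReal hfbot hD)
  have hmin : IsMinOn (fun z => φ z + g z + 1 / (2 * lam) * ‖z - x‖ ^ 2) D xhat :=
    isMinOn_iff.2 fun z hz => by
      have := hxhat z
      rw [hcoe xhat hxhatD, hcoe z hz] at this
      exact_mod_cast this
  -- `c ≥ ρφ` makes `φ + c/2 ‖· - x̂‖²` convex, `c ≥ ρ` absorbs the defect `ρ/2 ‖z - x̂‖²`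
  set c := max ρφ ρ
  obtain ⟨v, hvφ, hvg⟩ := exists_inner_le_of_add_le (s := lam⁻¹ • (x - xhat))
    (convexOn_add_half_mul_sq_norm_sub (strongConvexOn_neg_iff_convexOn_add.2 hφwc)
      (le_max_left ρφ ρ) xhat) (by fun_prop) hg hxhatD fun z hz => by
        have := hψ.add_inner_le_of_isMinOn hmin hxhatD hz
        simp only [sub_self, norm_zero]
        nlinarith [le_max_right ρφ ρ, sq_nonneg ‖z - xhat‖]
  refine ⟨v, mem_frechetSubdiffR_of_forall_le (c := c) fun z => by simpa using hvφ z, fun z => ?_⟩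
  rw [show (η * lam⁻¹) • x - η • v + (1 - η * lam⁻¹) • xhat
      = xhat + η • (lam⁻¹ • (x - xhat) - v) by module]
  by_cases hz : z ∈ D
  · rw [hcoe xhat hxhatD, hcoe z hz]
    exact_mod_cast prox_objective_le_of_subgradient hη (hvg z hz)
  · rw [show f z = ⊤ from not_not.1 hz, EReal.top_add_coe]
    exact le_top

/-- `x̂ = prox_{λψ}(x)` (for `ψ = φ + f`) can be written as a prox
step of `f`: there is `v ∈ ∂φ(x̂)` with
`x̂ = prox_{η f}( η λ⁻¹ x - η v + (1 - η λ⁻¹) x̂ )`, where the latter is expressed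
by the (strongly convex) minimization property characterizing the prox. -/
theorem stmt5 {d : ℕ} (φ : EuclideanSpace ℝ (Fin d) → ℝ)
    (f : EuclideanSpace ℝ (Fin d) → EReal) (ρφ ρ lam η : ℝ)
    (hρφ : 0 ≤ ρφ) (hρ : 0 ≤ ρ)
    (hφcont : Continuous φ)
    (hφwc : ConvexOn ℝ Set.univ (fun z => φ z + ρφ / 2 * ‖z‖ ^ 2))
    (hfproper : (∀ z, f z ≠ ⊥) ∧ ∃ z, f z ≠ ⊤)
    (hfconv : ERealConvexOn f) (hflsc : LowerSemicontinuous f)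
    (hψwc : ERealConvexOn (fun z => ((φ z : ℝ) : EReal) + f z + ((ρ / 2 * ‖z‖ ^ 2 : ℝ) : EReal)))
    (hlam : 0 < lam ∧ lam * ρ < 1) (hη : 0 < η)
    (x xhat : EuclideanSpace ℝ (Fin d))
    (hxhat : ∀ z, ((φ xhat : ℝ) : EReal) + f xhat + ((1 / (2 * lam) * ‖xhat - x‖ ^ 2 : ℝ) : EReal)
              ≤ ((φ z : ℝ) : EReal) + f z + ((1 / (2 * lam) * ‖z - x‖ ^ 2 : ℝ) : EReal)) :
    ∃ v ∈ FrechetSubdiffR φ xhat,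
      ∀ z, f xhat + ((1 / (2 * η) * ‖xhat - ((η * lam⁻¹) • x - η • v + (1 - η * lam⁻¹) • xhat)‖ ^ 2 : ℝ) : EReal)
        ≤ f z + ((1 / (2 * η) * ‖z - ((η * lam⁻¹) • x - η • v + (1 - η * lam⁻¹) • xhat)‖ ^ 2 : ℝ) : EReal) :=
  stmt5_general φ f ρφ ρ lam η hφcont hφwc hfproper hfconv hψwc hη x xhat hxhat
end

section
/- Under the assumptions of the previous statement (Φ L-smooth, concave in y, and the inner problem μ-strongly concave via Φ or h), the max function φ(x) := max_y { Φ(x,y) − h(y) } is differentiable with ∇φ(x) = ∇_x Φ(x, y*(x)), and ∇φ is Lipschitz continuous with constant L(1 + κ), where κ = max{L/μ, 1}. -/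
/-!
Strong concavity of `Φ(x,·) - h` gives quadratic growth of the objective around its maximizer
`y*(x)`. Adding the growth inequalities at `x` and `x'`, and using that `Φ(x,·) - Φ(x',·)` is
`L‖x - x'‖`-Lipschitz, shows that `y*` is `L/μ`-Lipschitz. Consequently `φ(x') - φ(x)` lies between
`Φ(x',y*(x)) - Φ(x,y*(x))` and that increment plus `Lκ‖x' - x‖²`, so `φ` has the same gradient at
`x` as `Φ(·,y*(x))`; the Lipschitz bound for this gradient then follows from the joint smoothness
of `Φ`.
-/

open scoped RealInnerProductSpace
open Set

lemma EReal.eq_coe_sub_of_coe_eq_coe_sub {a b : ℝ} {e : EReal} (h : (b : EReal) = a - e) :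
    e = ((a - b : ℝ) : EReal) := by
  induction e using EReal.rec with
  | bot => simp at h
  | top => simp at h
  | coe e =>
    rw [← EReal.coe_sub, EReal.coe_eq_coe_iff] at h
    rw [EReal.coe_eq_coe_iff]
    linarith

lemma EReal.coe_sub_sub_add_coe_neg (a c : ℝ) (e : EReal) :
    ((a - c : ℝ) : EReal) - (e + ((-c : ℝ) : EReal)) = (a : EReal) - e := by
  induction e using EReal.rec with
  | bot => rw [EReal.bot_add, EReal.coe_sub_bot, EReal.coe_sub_bot]
  | top => rw [EReal.top_add_coe, EReal.sub_top, EReal.sub_top]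
  | coe e =>
    rw [← EReal.coe_add, ← EReal.coe_sub, ← EReal.coe_sub, EReal.coe_eq_coe_iff]
    ring

lemma ERealConvexOn.le_coe {E : Type*} [AddCommGroup E] [Module ℝ E] {g : E → EReal}
    (hg : ERealConvexOn g) {x y : E} {r s : ℝ} (hx : g x = r) (hy : g y = s) {a b : ℝ}
    (ha : 0 ≤ a) (hb : 0 ≤ b) (hab : a + b = 1) :
    g (a • x + b • y) ≤ ((a * r + b * s : ℝ) : EReal) := by
  refine (hg x y a b ha hb hab).trans_eq ?_
  rw [hx, hy]
  norm_cast

lemma le_of_forall_mem_Ioo_combo_le {u v c : ℝ}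
    (h : ∀ t ∈ Ioo (0 : ℝ) 1, (1 - t) * u + t * v + (1 - t) * t * c ≤ u) : v + c ≤ u := by
  have hlim : Filter.Tendsto (fun t : ℝ => v + (1 - t) * c) (nhdsWithin 0 (Ioi 0))
      (nhds (v + (1 - 0) * c)) :=
    ((Continuous.tendsto (by fun_prop) 0)).mono_left nhdsWithin_le_nhds
  have hev : ∀ᶠ t in nhdsWithin 0 (Ioi 0), v + (1 - t) * c ≤ u := by
    filter_upwards [Ioo_mem_nhdsGT (zero_lt_one' ℝ)] with t ht
    have := h t ht
    nlinarith [ht.1]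
  simpa using le_of_tendsto hlim hev

section InnerProduct

variable {E : Type*} [NormedAddCommGroup E] [InnerProductSpace ℝ E]

-- Compare `y₀` with the points `(1 - t) • y₀ + t • y₁` of the segment and let `t → 0`.
lemma sub_add_sq_le_of_strongConcaveOn {ψ : E → ℝ} {h : E → EReal} {μ : ℝ}
    (hψ : StrongConcaveOn univ μ ψ) (hh : ERealConvexOn h) {y₀ y₁ : E} {r₀ r₁ : ℝ}
    (hmax : ∀ z, (ψ z : EReal) - h z ≤ (ψ y₀ : EReal) - h y₀)
    (h₀ : h y₀ = r₀) (h₁ : h y₁ = r₁) :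
    ψ y₁ - r₁ + μ / 2 * ‖y₁ - y₀‖ ^ 2 ≤ ψ y₀ - r₀ := by
  refine le_of_forall_mem_Ioo_combo_le fun t ht => ?_
  have ha : 0 ≤ 1 - t := by linarith [ht.2]
  have hab : 1 - t + t = 1 := by ring
  have hψt := hψ.2 (mem_univ y₀) (mem_univ y₁) ha ht.1.le hab
  have hht := hh.le_coe h₀ h₁ ha ht.1.le hab
  have hval : ((ψ ((1 - t) • y₀ + t • y₁) - ((1 - t) * r₀ + t * r₁) : ℝ) : EReal)
      ≤ ((ψ y₀ - r₀ : ℝ) : EReal) := by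
    rw [EReal.coe_sub, EReal.coe_sub, ← h₀]
    exact (EReal.sub_le_sub le_rfl hht).trans (hmax _)
  rw [EReal.coe_le_coe_iff] at hval
  simp only [smul_eq_mul] at hψt
  rw [norm_sub_rev] at hψt
  nlinarith

lemma sub_add_sq_le_of_concaveOn {ψ : E → ℝ} {h : E → EReal} {μ : ℝ}
    (hψ : ConcaveOn ℝ univ ψ) (hh : ERealConvexOn fun y => h y + ((-(μ / 2) * ‖y‖ ^ 2 : ℝ) : EReal))
    {y₀ y₁ : E} {r₀ r₁ : ℝ}
    (hmax : ∀ z, (ψ z : EReal) - h z ≤ (ψ y₀ : EReal) - h y₀)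
    (h₀ : h y₀ = r₀) (h₁ : h y₁ = r₁) :
    ψ y₁ - r₁ + μ / 2 * ‖y₁ - y₀‖ ^ 2 ≤ ψ y₀ - r₀ := by
  have hψ' : StrongConcaveOn univ μ fun y => ψ y - μ / 2 * ‖y‖ ^ 2 := by
    rw [strongConcaveOn_iff_convex]
    simpa using hψ
  have key := sub_add_sq_le_of_strongConcaveOn hψ' hh (y₀ := y₀) (y₁ := y₁)
    (r₀ := r₀ - μ / 2 * ‖y₀‖ ^ 2) (r₁ := r₁ - μ / 2 * ‖y₁‖ ^ 2)
    (fun z => by simpa only [EReal.coe_sub_sub_add_coe_neg, neg_mul] using hmax z)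
    (by rw [h₀, ← EReal.coe_add]; ring_nf) (by rw [h₁, ← EReal.coe_add]; ring_nf)
  linarith

end InnerProduct

lemma le_mul_add_of_sq_add_sq_le {a b c d L : ℝ} (ha : 0 ≤ a) (hL : 0 ≤ L) (hc : 0 ≤ c)
    (hd : 0 ≤ d) (h : a ^ 2 + b ^ 2 ≤ L ^ 2 * (c ^ 2 + d ^ 2)) : a ≤ L * (c + d) := by
  have hsq : a ^ 2 ≤ (L * (c + d)) ^ 2 := by nlinarith [sq_nonneg b, mul_nonneg hc hd]
  exact (pow_le_pow_iff_left₀ ha (by positivity) two_ne_zero).1 hsq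

section Gradient

variable {E F : Type*} [NormedAddCommGroup E] [NormedAddCommGroup F] [InnerProductSpace ℝ F]
  [CompleteSpace F]

lemma abs_sub_le_of_hasGradientAt {f : F → ℝ} {g : F → F} {C : ℝ}
    (hf : ∀ y, HasGradientAt f (g y) y) (hg : ∀ y, ‖g y‖ ≤ C) (y y' : F) :
    |f y - f y'| ≤ C * ‖y - y'‖ := by
  rw [← Real.norm_eq_abs]
  exact convex_univ.norm_image_sub_le_of_norm_hasFDerivWithin_le
    (fun z _ => (hf z).hasFDerivAt.hasFDerivWithinAt)
    (fun z _ => by rw [LinearIsometryEquiv.norm_map]; exact hg z) (mem_univ y') (mem_univ y)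

lemma abs_sub_sub_le_of_hasGradientAt {Φ : E → F → ℝ} {G : E → F → F} {K : ℝ}
    (hG : ∀ x y, HasGradientAt (Φ x) (G x y) y)
    (hGlip : ∀ x x' y, ‖G x y - G x' y‖ ≤ K * ‖x - x'‖) (x x' : E) (y y' : F) :
    |(Φ x y - Φ x' y) - (Φ x y' - Φ x' y')| ≤ K * ‖x - x'‖ * ‖y - y'‖ := by
  refine abs_sub_le_of_hasGradientAt (f := fun y => Φ x y - Φ x' y) (fun z => ?_)
    (hGlip x x') y y'
  rw [hasGradientAt_iff_hasFDerivAt, map_sub]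
  exact (hG x z).hasFDerivAt.sub (hG x' z).hasFDerivAt

-- `φ - f` vanishes to second order at `x`, so it has zero derivative there.
lemma HasGradientAt.of_abs_sub_sub_le_sq {f φ : F → ℝ} {g x : F} (hf : HasGradientAt f g x)
    {C : ℝ} (h : ∀ x', |φ x' - φ x - (f x' - f x)| ≤ C * ‖x' - x‖ ^ 2) :
    HasGradientAt φ g x := by
  have he : HasFDerivAt (fun x' => φ x' - φ x - (f x' - f x)) 0 x :=
    Asymptotics.IsBigO.hasFDerivAt (𝕜 := ℝ) (n := 2)
      (Asymptotics.IsBigO.of_bound C (Filter.Eventually.of_forall fun x' => by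
        simpa only [Real.norm_eq_abs, abs_pow, abs_norm] using h x')) one_lt_two
  have := (he.add hf.hasFDerivAt).add_const (φ x - f x)
  rw [zero_add] at this
  exact this.congr_of_eventuallyEq <| Filter.Eventually.of_forall fun x' => by
    simp only [Pi.add_apply]; ring

end Gradient

section ParametricMax

variable {E F : Type*} [NormedAddCommGroup E] [NormedAddCommGroup F]
  {Φ : E → F → ℝ} {h : F → EReal} {ystar : E → F} {φ : E → ℝ} {K : ℝ}

-- Adding the growth inequalities at `x` and `x'` gives
-- `μ ‖y* x - y* x'‖² ≤ K ‖x - x'‖ ‖y* x - y* x'‖`.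
lemma norm_sub_le_of_quadratic_growth {μ : ℝ} (hμ : 0 < μ) (hK : 0 ≤ K)
    (hgrowth : ∀ x z (r : ℝ), h z = r → Φ x z - r + μ / 2 * ‖z - ystar x‖ ^ 2 ≤ φ x)
    (hval : ∀ x, h (ystar x) = ((Φ x (ystar x) - φ x : ℝ) : EReal))
    (hcross : ∀ x x' y y', |(Φ x y - Φ x' y) - (Φ x y' - Φ x' y')| ≤ K * ‖x - x'‖ * ‖y - y'‖)
    (x x' : E) : ‖ystar x - ystar x'‖ ≤ K / μ * ‖x - x'‖ := by
  have h₁ := hgrowth x _ _ (hval x')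
  have h₂ := hgrowth x' _ _ (hval x)
  have h₃ := (abs_le.1 (hcross x x' (ystar x) (ystar x'))).2
  rw [norm_sub_rev] at h₁
  have hμD : μ * ‖ystar x - ystar x'‖ ^ 2 ≤ K * ‖x - x'‖ * ‖ystar x - ystar x'‖ := by linarith
  rw [div_mul_eq_mul_div, le_div_iff₀ hμ]
  rcases (norm_nonneg (ystar x - ystar x')).eq_or_lt with hD | hD
  · rw [← hD, zero_mul]; positivity
  · nlinarith

-- `φ x' - φ x` is squeezed between the increments of `Φ (·, y* x)` and `Φ (·, y* x')`.
lemma abs_sub_sub_le_of_isMax {κ : ℝ} (hK : 0 ≤ K)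
    (hmax : ∀ x z (r : ℝ), h z = r → Φ x z - r ≤ φ x)
    (hval : ∀ x, h (ystar x) = ((Φ x (ystar x) - φ x : ℝ) : EReal))
    (hcross : ∀ x x' y y', |(Φ x y - Φ x' y) - (Φ x y' - Φ x' y')| ≤ K * ‖x - x'‖ * ‖y - y'‖)
    (hlip : ∀ x x', ‖ystar x - ystar x'‖ ≤ κ * ‖x - x'‖) (x x' : E) :
    |φ x' - φ x - (Φ x' (ystar x) - Φ x (ystar x))| ≤ K * κ * ‖x' - x‖ ^ 2 := by
  have hlow := hmax x' _ _ (hval x)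
  have hup := hmax x _ _ (hval x')
  have hc := (abs_le.1 (hcross x' x (ystar x') (ystar x))).2
  have hc' : K * ‖x' - x‖ * ‖ystar x' - ystar x‖ ≤ K * ‖x' - x‖ * (κ * ‖x' - x‖) :=
    mul_le_mul_of_nonneg_left (hlip x' x) (by positivity)
  rw [abs_le]
  constructor <;> nlinarith

end ParametricMax

theorem stmt10_general {d n : ℕ}
    (Φ : EuclideanSpace ℝ (Fin d) → EuclideanSpace ℝ (Fin n) → ℝ)
    (Gx : EuclideanSpace ℝ (Fin d) → EuclideanSpace ℝ (Fin n) → EuclideanSpace ℝ (Fin d))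
    (Gy : EuclideanSpace ℝ (Fin d) → EuclideanSpace ℝ (Fin n) → EuclideanSpace ℝ (Fin n))
    (hGx : ∀ x y, HasGradientAt (fun x' => Φ x' y) (Gx x y) x)
    (hGy : ∀ x y, HasGradientAt (fun y' => Φ x y') (Gy x y) y)
    (L μ : ℝ) (hL : 0 < L) (hμ : 0 < μ)
    (hsmooth : ∀ x x' y y',
      ‖Gx x y - Gx x' y'‖ ^ 2 + ‖Gy x y - Gy x' y'‖ ^ 2
        ≤ L ^ 2 * (‖x - x'‖ ^ 2 + ‖y - y'‖ ^ 2))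
    (hconc : ∀ x, ConcaveOn ℝ Set.univ (fun y => Φ x y))
    (h : EuclideanSpace ℝ (Fin n) → EReal)
    (hhconv : ERealConvexOn h)
    (hstrong : (∀ x, ConcaveOn ℝ Set.univ (fun y => Φ x y + μ / 2 * ‖y‖ ^ 2)) ∨
      ERealConvexOn (fun y => h y + ((-(μ / 2) * ‖y‖ ^ 2 : ℝ) : EReal)))
    (κ : ℝ) (hκ : κ = max (L / μ) 1)
    (ystar : EuclideanSpace ℝ (Fin d) → EuclideanSpace ℝ (Fin n))
    (hystar : ∀ x z, ((Φ x z : ℝ) : EReal) - h z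
        ≤ ((Φ x (ystar x) : ℝ) : EReal) - h (ystar x))
    (φ : EuclideanSpace ℝ (Fin d) → ℝ)
    (hφ : ∀ x, (φ x : EReal) = ((Φ x (ystar x) : ℝ) : EReal) - h (ystar x)) :
    (∀ x, HasGradientAt φ (Gx x (ystar x)) x) ∧
    (∀ x x', ‖Gx x (ystar x) - Gx x' (ystar x')‖ ≤ L * (1 + κ) * ‖x - x'‖) := by
  have hGxlip : ∀ x x' y y', ‖Gx x y - Gx x' y'‖ ≤ L * (‖x - x'‖ + ‖y - y'‖) := fun x x' y y' =>
    le_mul_add_of_sq_add_sq_le (norm_nonneg _) hL.le (norm_nonneg _) (norm_nonneg _)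
      (hsmooth x x' y y')
  have hGylip : ∀ x x' y, ‖Gy x y - Gy x' y‖ ≤ L * ‖x - x'‖ := fun x x' y => by
    simpa using le_mul_add_of_sq_add_sq_le (b := ‖Gx x y - Gx x' y‖) (norm_nonneg _) hL.le
      (norm_nonneg _) (norm_nonneg (y - y)) (by linarith [hsmooth x x' y y])
  have hcross := abs_sub_sub_le_of_hasGradientAt hGy hGylip
  have hval : ∀ x, h (ystar x) = ((Φ x (ystar x) - φ x : ℝ) : EReal) := fun x =>
    EReal.eq_coe_sub_of_coe_eq_coe_sub (hφ x)
  have hgrowth : ∀ x z (r : ℝ), h z = r → Φ x z - r + μ / 2 * ‖z - ystar x‖ ^ 2 ≤ φ x := by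
    intro x z r hz
    have := hstrong.elim
      (fun hΦ => sub_add_sq_le_of_strongConcaveOn (strongConcaveOn_iff_convex.2 (hΦ x)) hhconv
        (hystar x) (hval x) hz)
      (fun hh => sub_add_sq_le_of_concaveOn (hconc x) hh (hystar x) (hval x) hz)
    linarith
  have hlip : ∀ x x', ‖ystar x - ystar x'‖ ≤ κ * ‖x - x'‖ := fun x x' =>
    (norm_sub_le_of_quadratic_growth hμ hL.le hgrowth hval hcross x x').trans
      (by gcongr; exact hκ ▸ le_max_left _ _)
  refine ⟨fun x => (hGx x (ystar x)).of_abs_sub_sub_le_sq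
    (abs_sub_sub_le_of_isMax hL.le (fun x z r hz => ?_) hval hcross hlip x), fun x x' => ?_⟩
  · exact (le_add_of_nonneg_right (by positivity)).trans (hgrowth x z r hz)
  · calc ‖Gx x (ystar x) - Gx x' (ystar x')‖ ≤ L * (‖x - x'‖ + κ * ‖x - x'‖) := by
          grw [hGxlip, hlip]
      _ = L * (1 + κ) * ‖x - x'‖ := by ring

/-- Danskin, smooth strongly concave case: the max function
`φ(x) = max_y {Φ(x,y) - h(y)} = Φ(x, y*(x)) - h(y*(x))` is differentiable with
`∇φ(x) = ∇_x Φ(x, y*(x))`, and `∇φ` is Lipschitz with constant `L(1+κ)`,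
`κ = max{L/μ, 1}`. -/
theorem stmt10 {d n : ℕ}
    (Φ : EuclideanSpace ℝ (Fin d) → EuclideanSpace ℝ (Fin n) → ℝ)
    (Gx : EuclideanSpace ℝ (Fin d) → EuclideanSpace ℝ (Fin n) → EuclideanSpace ℝ (Fin d))
    (Gy : EuclideanSpace ℝ (Fin d) → EuclideanSpace ℝ (Fin n) → EuclideanSpace ℝ (Fin n))
    (hGx : ∀ x y, HasGradientAt (fun x' => Φ x' y) (Gx x y) x)
    (hGy : ∀ x y, HasGradientAt (fun y' => Φ x y') (Gy x y) y)
    (L μ : ℝ) (hL : 0 < L) (hμ : 0 < μ)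
    (hsmooth : ∀ x x' y y',
      ‖Gx x y - Gx x' y'‖ ^ 2 + ‖Gy x y - Gy x' y'‖ ^ 2
        ≤ L ^ 2 * (‖x - x'‖ ^ 2 + ‖y - y'‖ ^ 2))
    (hconc : ∀ x, ConcaveOn ℝ Set.univ (fun y => Φ x y))
    (h : EuclideanSpace ℝ (Fin n) → EReal)
    (hhproper : (∀ y, h y ≠ ⊥) ∧ ∃ y, h y ≠ ⊤)
    (hhconv : ERealConvexOn h) (hhlsc : LowerSemicontinuous h)
    (hstrong : (∀ x, ConcaveOn ℝ Set.univ (fun y => Φ x y + μ / 2 * ‖y‖ ^ 2)) ∨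
      ERealConvexOn (fun y => h y + ((-(μ / 2) * ‖y‖ ^ 2 : ℝ) : EReal)))
    (κ : ℝ) (hκ : κ = max (L / μ) 1)
    (ystar : EuclideanSpace ℝ (Fin d) → EuclideanSpace ℝ (Fin n))
    (hystar : ∀ x z, ((Φ x z : ℝ) : EReal) - h z
        ≤ ((Φ x (ystar x) : ℝ) : EReal) - h (ystar x))
    (φ : EuclideanSpace ℝ (Fin d) → ℝ)
    (hφ : ∀ x, (φ x : EReal) = ((Φ x (ystar x) : ℝ) : EReal) - h (ystar x)) :
    (∀ x, HasGradientAt φ (Gx x (ystar x)) x) ∧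
    (∀ x x', ‖Gx x (ystar x) - Gx x' (ystar x')‖ ≤ L * (1 + κ) * ‖x - x'‖) :=
  stmt10_general Φ Gx Gy hGx hGy L μ hL hμ hsmooth hconc h hhconv hstrong κ hκ ystar hystar φ hφ
end

section
/- Let Ψ(x,y) = f(x) + Φ(x,y) − h(y) with Φ concave in y, and suppose the gradient-ascent inequality 0 ≤ Ψ(x_k, y_k) − Ψ(x_k, y*_m) + (1/(2η_y))(‖y*_m − y_{k−1}‖² − ‖y*_m − y_k‖²) holds, Φ(·, y) is L-Lipschitz, and ‖x_{l+1} − x_l‖ ≤ η_x(L + L_f) for all l. Then with Δ_k := max_y Ψ(x_k, y) − Ψ(x_k, y_k) and y*_m ∈ argmax_y Ψ(x_m, y), for all 1 ≤ m ≤ k: Δ_k ≤ 2 η_x L (L + L_f)(k − m) + (1/(2η_y)) ( ‖y_{k−1} − y*_m‖² − ‖y_k − y*_m‖² ). -/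
lemma stmt19_aux {d : ℕ} (x : ℕ → EuclideanSpace ℝ (Fin d)) (C : ℝ)
    (hstep : ∀ l : ℕ, ‖x (l + 1) - x l‖ ≤ C) :
    ∀ m k : ℕ, m ≤ k → ‖x k - x m‖ ≤ C * ((k : ℝ) - m) := by
  intro m k hmk
  induction k, hmk using Nat.le_induction with
  | base => simp
  | succ k hmk ih =>
    have h1 : ‖x (k + 1) - x m‖ ≤ ‖x (k+1) - x k‖ + ‖x k - x m‖ :=
      norm_sub_le_norm_sub_add_norm_sub _ _ _
    have := hstep k
    push_cast
    nlinarith [norm_nonneg (x (k+1) - x k), norm_nonneg (x k - x m)]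

/-- drift-plus-telescoping bound on
`Δ_k = max_y Ψ(x_k, y) - Ψ(x_k, y_k)` for alternating GDA, where
`Ψ(x,y) = f(x) + Φ(x,y) - h(y)` and `y*_m` maximizes `Ψ(x_m, ·)`. -/
theorem stmt19 {d n : ℕ}
    (f : EuclideanSpace ℝ (Fin d) → ℝ)
    (Φ : EuclideanSpace ℝ (Fin d) → EuclideanSpace ℝ (Fin n) → ℝ)
    (h : EuclideanSpace ℝ (Fin n) → ℝ)
    (Ψ : EuclideanSpace ℝ (Fin d) → EuclideanSpace ℝ (Fin n) → ℝ)
    (hΨ : ∀ x y, Ψ x y = f x + Φ x y - h y)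
    (hconc : ∀ x, ConcaveOn ℝ Set.univ (fun y => Φ x y))
    (L Lf ηx ηy : ℝ) (hL : 0 ≤ L) (hLf : 0 ≤ Lf) (hηx : 0 ≤ ηx) (hηy : 0 < ηy)
    (x : ℕ → EuclideanSpace ℝ (Fin d)) (y ystar : ℕ → EuclideanSpace ℝ (Fin n))
    (hstar : ∀ m, ∀ y', Ψ (x m) y' ≤ Ψ (x m) (ystar m))
    (hascent : ∀ m k : ℕ, 1 ≤ k →
      0 ≤ Ψ (x k) (y k) - Ψ (x k) (ystar m)
        + (1 / (2 * ηy)) * (‖ystar m - y (k - 1)‖ ^ 2 - ‖ystar m - y k‖ ^ 2))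
    (hlip : ∀ y' x1 x2, |Φ x1 y' - Φ x2 y'| ≤ L * ‖x1 - x2‖)
    (hstep : ∀ l : ℕ, ‖x (l + 1) - x l‖ ≤ ηx * (L + Lf))
    (Δ : ℕ → ℝ) (hΔ : ∀ k, Δ k = Ψ (x k) (ystar k) - Ψ (x k) (y k)) :
    ∀ m k : ℕ, 1 ≤ m → m ≤ k →
      Δ k ≤ 2 * ηx * L * (L + Lf) * ((k : ℝ) - m)
        + (1 / (2 * ηy)) * (‖y (k - 1) - ystar m‖ ^ 2 - ‖y k - ystar m‖ ^ 2) := by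
  intro m k hm hmk
  have hk1 : 1 ≤ k := le_trans hm hmk
  have A := hascent m k hk1
  -- distance bound
  have hx : ‖x k - x m‖ ≤ ηx * (L + Lf) * ((k : ℝ) - m) :=
    stmt19_aux x _ hstep m k hmk
  -- Lipschitz pieces
  have l1 : Φ (x k) (ystar k) - Φ (x m) (ystar k) ≤ L * ‖x k - x m‖ :=
    (abs_le.mp (hlip (ystar k) (x k) (x m))).2
  have l2 : Φ (x m) (ystar m) - Φ (x k) (ystar m) ≤ L * ‖x m - x k‖ :=
    (abs_le.mp (hlip (ystar m) (x m) (x k))).2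
  have hsym : ‖x m - x k‖ = ‖x k - x m‖ := norm_sub_rev _ _
  -- optimality of ystar m at x m
  rw [hsym] at l2
  have hopt := hstar m (ystar k)
  -- B : Ψ (x k) (ystar k) - Ψ (x k) (ystar m) ≤ 2 * L * ‖x k - x m‖
  have B : Ψ (x k) (ystar k) - Ψ (x k) (ystar m) ≤ 2 * L * ‖x k - x m‖ := by
    simp only [hΨ] at hopt ⊢
    linarith
  have n1 : ‖ystar m - y (k-1)‖ = ‖y (k-1) - ystar m‖ := norm_sub_rev _ _
  have n2 : ‖ystar m - y k‖ = ‖y k - ystar m‖ := norm_sub_rev _ _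
  rw [n1, n2] at A
  have hLx : L * ‖x k - x m‖ ≤ L * (ηx * (L + Lf) * ((k : ℝ) - m)) :=
    mul_le_mul_of_nonneg_left hx hL
  rw [hΔ]
  simp only [hΨ] at A B ⊢
  linarith
end
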